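/- Define, for s > 0, h(s) = −1/s² + (1 − s²/2)·log s + (1 + 1/s)³(s² − 10s + 1)·log(1+s) + (1/2)(1 + 4/s)^{3/2}(s² − 20s + 12)·log((√(4+s) − √s)/(√(4+s) + √s)). Then as s → 0⁺, h(s) = −111/(2s) + O(log s); in particular s·h(s) → −111/2 as s → 0⁺. -/

import Mathlib

open Filter Topology Asymptotics

/-- The one-loop gluon-loop vacuum polarization function of the Curci–Ferrari model. -/
noncomputable def gluonLoopH (s : ℝ) : ℝ :=
  -1 / s ^ 2 + (1 - s ^ 2 / 2) * Real.log s
    + (1 + 1 / s) ^ 3 * (s ^ 2 - 10 * s + 1) * Real.log (1 + s)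
    + (1 / 2) * (1 + 4 / s) ^ ((3 : ℝ) / 2) * (s ^ 2 - 20 * s + 12) *
        Real.log ((Real.sqrt (4 + s) - Real.sqrt s) / (Real.sqrt (4 + s) + Real.sqrt s))

/-!
With `u = √s / √(4 + s)` one has `(1 + 4/s)^(3/2) = u⁻³` and the last logarithm of `h` is
`log (1 - u) - log (1 + u)`. Inserting the Taylor expansions `log (1 + s) = s - s²/2 + O(s³)`
and `log (1 + u) - log (1 - u) = 2u + 2u³/3 + O(u⁵)`, and using `u² = s / (4 + s)`, the poles
of orders 3 and 2 cancel and the polar part left over is `-111 / (2s)`; apart from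
`(1 - s²/2) log s`, everything else is bounded near `0`.
-/

open Real Finset

theorem abs_log_sub_add_sum_range_le_of_abs_le_half {x : ℝ} (hx : |x| ≤ 1 / 2) (n : ℕ) :
    |(∑ i ∈ range n, x ^ (i + 1) / (i + 1)) + log (1 - x)| ≤ 2 * |x| ^ (n + 1) := by
  calc _ ≤ |x| ^ (n + 1) / (1 - |x|) := abs_log_sub_add_sum_range_le (by linarith) n
    _ ≤ |x| ^ (n + 1) / (1 / 2) := by gcongr; linarith
    _ = 2 * |x| ^ (n + 1) := by ring

noncomputable def logOneAddRem (x : ℝ) : ℝ := log (1 + x) - (x - x ^ 2 / 2)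

noncomputable def logRatioRem (x : ℝ) : ℝ := log (1 + x) - log (1 - x) - (2 * x + 2 * x ^ 3 / 3)

theorem abs_logOneAddRem_le {x : ℝ} (hx : |x| ≤ 1 / 2) : |logOneAddRem x| ≤ 2 * |x| ^ 3 := by
  have h := abs_log_sub_add_sum_range_le_of_abs_le_half (x := -x) (by rwa [abs_neg]) 2
  simp only [sum_range_succ, sum_range_zero, abs_neg, sub_neg_eq_add] at h
  convert h using 2
  simp only [logOneAddRem]; push_cast; ring

theorem abs_logRatioRem_le {x : ℝ} (hx : |x| ≤ 1 / 2) : |logRatioRem x| ≤ 4 * |x| ^ 5 := by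
  have hpos := abs_log_sub_add_sum_range_le_of_abs_le_half (x := -x) (by rwa [abs_neg]) 4
  have hneg := abs_log_sub_add_sum_range_le_of_abs_le_half hx 4
  rw [abs_neg] at hpos
  have hsplit : logRatioRem x = ((∑ i ∈ range 4, (-x) ^ (i + 1) / (i + 1)) + log (1 - -x))
      - ((∑ i ∈ range 4, x ^ (i + 1) / (i + 1)) + log (1 - x)) := by
    simp only [logRatioRem, sum_range_succ, sum_range_zero, sub_neg_eq_add]
    push_cast; ring
  rw [hsplit]
  linarith [abs_sub (((∑ i ∈ range 4, (-x) ^ (i + 1) / (i + 1)) + log (1 - -x)))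
      ((∑ i ∈ range 4, x ^ (i + 1) / (i + 1)) + log (1 - x))]

theorem one_add_four_div_rpow_three_halves {s : ℝ} (hs : 0 < s) :
    (1 + 4 / s) ^ ((3 : ℝ) / 2) = (√(4 + s) / √s) ^ 3 := by
  have hsq : 1 + 4 / s = (√(4 + s) / √s) ^ 2 := by
    rw [div_pow, sq_sqrt hs.le, sq_sqrt (by linarith)]
    field_simp
    ring
  rw [hsq, ← rpow_natCast, ← rpow_mul (by positivity)]
  norm_num

theorem log_sqrt_sub_div_sqrt_add {s : ℝ} (hs : 0 < s) :
    log ((√(4 + s) - √s) / (√(4 + s) + √s)) =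
      log (1 - √s / √(4 + s)) - log (1 + √s / √(4 + s)) := by
  have hv : 0 < √(4 + s) := sqrt_pos.2 (by linarith)
  have hlt : √s / √(4 + s) < 1 := (div_lt_one hv).2 (sqrt_lt_sqrt hs.le (by linarith))
  have hu : 0 < √s / √(4 + s) := by positivity
  rw [← log_div (by linarith) (by linarith)]
  congr 1
  field_simp

theorem gluonLoopH_eq_of_pos {s : ℝ} (hs : 0 < s) :
    gluonLoopH s = -111 / (2 * s) + (1 - s ^ 2 / 2) * log s
      + (83 / 2 + 29 * s / 3 + 14 * s ^ 2 / 3 + 9 * s ^ 3 / 2 - s ^ 4 / 2)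
      + (1 + s) ^ 3 * (s ^ 2 - 10 * s + 1) * (logOneAddRem s / s ^ 3)
      - (s ^ 2 - 20 * s + 12) / 2 *
          (logRatioRem (√s / √(4 + s)) / (√s / √(4 + s)) ^ 3) := by
  set u := √s / √(4 + s) with hu
  have hu0 : 0 < u := by positivity
  have hu2 : u ^ 2 = s / (4 + s) := by rw [hu, div_pow, sq_sqrt hs.le, sq_sqrt (by linarith)]
  have hlog1 : log (1 + s) = s - s ^ 2 / 2 + logOneAddRem s := by rw [logOneAddRem]; ring
  have hlog2 : log (1 - u) - log (1 + u) = -(2 * u + 2 * u ^ 3 / 3 + logRatioRem u) := by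
    rw [logRatioRem]; ring
  have hratio : (√(4 + s) / √s) ^ 3 * (2 * u + 2 * u ^ 3 / 3 + logRatioRem u)
      = 2 * (4 + s) / s + 2 / 3 + logRatioRem u / u ^ 3 := by
    have : √(4 + s) / √s = u⁻¹ := by rw [hu, inv_div]
    rw [this]
    have hinv : u⁻¹ ^ 2 = (4 + s) / s := by rw [inv_pow, hu2, inv_div]
    calc u⁻¹ ^ 3 * (2 * u + 2 * u ^ 3 / 3 + logRatioRem u)
        = 2 * u⁻¹ ^ 2 + 2 / 3 + logRatioRem u / u ^ 3 := by field_simp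
      _ = _ := by rw [hinv]; ring
  rw [gluonLoopH, one_add_four_div_rpow_three_halves hs, log_sqrt_sub_div_sqrt_add hs, ← hu,
    hlog1, hlog2, show ∀ a b c : ℝ, 1 / 2 * a * b * -c = -(b / 2) * (a * c) by intros; ring,
    hratio]
  field_simp
  ring

theorem abs_logRatioRem_sqrt_div_le {s : ℝ} (hs0 : 0 < s) (hs1 : s ≤ 1) :
    |logRatioRem (√s / √(4 + s)) / (√s / √(4 + s)) ^ 3| ≤ s := by
  set u := √s / √(4 + s) with hu
  have hu0 : 0 < u := by positivity
  have hu2 : u ^ 2 = s / (4 + s) := by rw [hu, div_pow, sq_sqrt hs0.le, sq_sqrt (by linarith)]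
  have hu2le : u ^ 2 ≤ s / 4 := by rw [hu2]; gcongr; linarith
  have hhalf : u ≤ 1 / 2 := by nlinarith
  rw [abs_div, abs_of_pos (pow_pos hu0 3), div_le_iff₀ (pow_pos hu0 3)]
  calc |logRatioRem u| ≤ 4 * |u| ^ 5 := abs_logRatioRem_le (by rwa [abs_of_pos hu0])
    _ = 4 * u ^ 2 * u ^ 3 := by rw [abs_of_pos hu0]; ring
    _ ≤ s * u ^ 3 := by gcongr; linarith

theorem gluonLoopH_sub_singular_isBigO_one :
    (fun s => gluonLoopH s + 111 / (2 * s) - (1 - s ^ 2 / 2) * log s) =O[𝓝[>] 0]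
      (fun _ => (1 : ℝ)) := by
  refine IsBigO.of_bound 100 ?_
  filter_upwards [Ioc_mem_nhdsGT (by norm_num : (0 : ℝ) < 1 / 2)] with s ⟨hs0, hs1⟩
  have hR1 : |logOneAddRem s / s ^ 3| ≤ 2 := by
    rw [abs_div, abs_of_pos (pow_pos hs0 3), div_le_iff₀ (pow_pos hs0 3)]
    simpa [abs_of_pos hs0] using abs_logOneAddRem_le (x := s) (by rwa [abs_of_pos hs0])
  have hR2 := abs_logRatioRem_sqrt_div_le hs0 (by linarith)
  set X := logOneAddRem s / s ^ 3
  set Y := logRatioRem (√s / √(4 + s)) / (√s / √(4 + s)) ^ 3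
  have hP : |83 / 2 + 29 * s / 3 + 14 * s ^ 2 / 3 + 9 * s ^ 3 / 2 - s ^ 4 / 2| ≤ 49 := by
    have hs3 : s ^ 3 ≤ 1 := pow_le_one₀ hs0.le (by linarith)
    rw [abs_le]; constructor <;> nlinarith [pow_pos hs0 3]
  have hA : |(1 + s) ^ 3 * (s ^ 2 - 10 * s + 1)| ≤ 16 := by
    rw [abs_mul]
    have h1 : |(1 + s) ^ 3| ≤ 4 := by
      rw [abs_of_pos (by positivity)]
      calc (1 + s) ^ 3 ≤ (3 / 2) ^ 3 := by gcongr; linarith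
        _ ≤ 4 := by norm_num
    have h2 : |s ^ 2 - 10 * s + 1| ≤ 4 := by rw [abs_le]; constructor <;> nlinarith
    calc |(1 + s) ^ 3| * |s ^ 2 - 10 * s + 1| ≤ 4 * 4 :=
          mul_le_mul h1 h2 (abs_nonneg _) (by norm_num)
      _ = 16 := by norm_num
  have hB : |(s ^ 2 - 20 * s + 12) / 2| ≤ 6 := by
    rw [abs_le]; constructor <;> nlinarith
  rw [norm_one, mul_one, norm_eq_abs, gluonLoopH_eq_of_pos hs0]
  calc _ = |(83 / 2 + 29 * s / 3 + 14 * s ^ 2 / 3 + 9 * s ^ 3 / 2 - s ^ 4 / 2)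
        + (1 + s) ^ 3 * (s ^ 2 - 10 * s + 1) * X - (s ^ 2 - 20 * s + 12) / 2 * Y| := by
        congr 1; ring
    _ ≤ |83 / 2 + 29 * s / 3 + 14 * s ^ 2 / 3 + 9 * s ^ 3 / 2 - s ^ 4 / 2|
        + |(1 + s) ^ 3 * (s ^ 2 - 10 * s + 1)| * |X| + |(s ^ 2 - 20 * s + 12) / 2| * |Y| := by
        rw [← abs_mul, ← abs_mul]
        exact (abs_sub _ _).trans (add_le_add_left (abs_add_le _ _) _)
    _ ≤ 49 + 16 * 2 + 6 * (1 / 2) := by gcongr; linarith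
    _ ≤ 100 := by norm_num

theorem gluonLoopH_asymptotics :
    ((fun s : ℝ => gluonLoopH s + 111 / (2 * s)) =O[𝓝[>] (0 : ℝ)] fun s => Real.log s) ∧
    Tendsto (fun s : ℝ => s * gluonLoopH s) (𝓝[>] (0 : ℝ)) (𝓝 (-111 / 2)) := by
  have hreg := gluonLoopH_sub_singular_isBigO_one
  have hcoef : Tendsto (fun s : ℝ => 1 - s ^ 2 / 2) (𝓝[>] 0) (𝓝 1) := by
    have : Continuous fun s : ℝ => 1 - s ^ 2 / 2 := by fun_prop
    simpa using (this.tendsto 0).mono_left nhdsWithin_le_nhds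
  refine ⟨?_, ?_⟩
  · have hone : (fun _ => (1 : ℝ)) =O[𝓝[>] 0] log :=
      ((isLittleO_one_left_iff ℝ).2 (tendsto_abs_atBot_atTop.comp tendsto_log_nhdsGT_zero)).isBigO
    have hcoef_log : (fun s => (1 - s ^ 2 / 2) * log s) =O[𝓝[>] 0] log :=
      ((hcoef.isBigO_one ℝ).mul (isBigO_refl log _)).congr_right fun _ => one_mul _
    exact ((hreg.trans hone).add hcoef_log).congr_left fun s => by ring
  · have hs_reg : Tendsto (fun s => s * (gluonLoopH s + 111 / (2 * s) - (1 - s ^ 2 / 2) * log s))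
        (𝓝[>] 0) (𝓝 0) :=
      ((isBigO_refl (fun s : ℝ => s) _).mul hreg).trans_tendsto
        (by simp only [mul_one]; exact tendsto_nhdsWithin_of_tendsto_nhds tendsto_id)
    have hslog : Tendsto (fun s : ℝ => s * log s) (𝓝[>] 0) (𝓝 0) := by
      simpa using (continuous_mul_log.tendsto 0).mono_left nhdsWithin_le_nhds
    have := (hs_reg.add (hcoef.mul hslog)).add_const (-111 / 2)
    rw [mul_zero, zero_add, zero_add] at this
    refine this.congr' ?_
    filter_upwards [self_mem_nhdsWithin] with s (hs : 0 < s)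
    field_simp
    ring
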